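/- arXiv:2404.12326 — 3 statements merged into one kernel-verified Lean document; each statement's English description precedes it below -/
import Mathlib

section
/- The NAP partial compositions on labelled rooted trees satisfy parallel associativity: for rooted trees x on vertex set S, y on T, z on R, and distinct vertices s, s' of x, one has (x ∘_s y) ∘_{s'} z = (x ∘_{s'} z) ∘_s y. -/
/-- A labelled rooted tree with vertex set `supp` inside an ambient label type `V`,
given by its root and its parent function (normalized to the identity outside
`supp`, and fixing the root). -/
structure LTree (V : Type) where
  supp : Finset V
  root : V
  parent : V → V

namespace LTree

variable {V : Type} [DecidableEq V]

/-- `t` is an honest rooted tree on its vertex set `t.supp`:  the root is a vertex,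
the parent map fixes the root, sends vertices to vertices, every vertex reaches the
root by iterating the parent map (connectedness/acyclicity), and the parent map is
normalized to the identity outside the vertex set. -/
def IsTree (t : LTree V) : Prop :=
  t.root ∈ t.supp ∧ t.parent t.root = t.root ∧
    (∀ v ∈ t.supp, t.parent v ∈ t.supp ∧ ∃ n, t.parent^[n] v = t.root) ∧
    (∀ v, v ∉ t.supp → t.parent v = v)

/-- The NAP partial composition `u ∘ₛ v`: replace the vertex `s` of `u` by the tree
`v`, reconnecting each edge of `u` arriving at `s` to the root of `v`. -/
def ncomp (u : LTree V) (s : V) (v : LTree V) : LTree V where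
  supp := u.supp.erase s ∪ v.supp
  root := if u.root = s then v.root else u.root
  parent x :=
    if x ∈ u.supp.erase s then (if u.parent x = s then v.root else u.parent x)
    else if x ∈ v.supp then
      (if x = v.root then (if u.parent s = s then v.root else u.parent s) else v.parent x)
    else x

/-- Relabelling a tree along a bijection of the ambient label type. -/
def relabel (e : V ≃ V) (t : LTree V) : LTree V where
  supp := t.supp.image e
  root := e t.root
  parent x := e (t.parent (e.symm x))

/-- The single-vertex tree on the vertex `a`. -/
def eta (a : V) : LTree V := ⟨{a}, a, fun x => x⟩

/-- The edges of `u` arriving at `s`, identified with the children of `s`. -/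
def children (u : LTree V) (s : V) : Finset V :=
  (u.supp.erase s).filter (fun w => u.parent w = s)

/-- The tree `u ∘ₛᶠ v` for `f : In(s,u) → Ver(v)`: replace the vertex `s` of `u` by
the tree `v`, reconnecting each edge `a ∈ In(s,u)` to the vertex `f a` of `v`. -/
def fcomp (u : LTree V) (s : V) (v : LTree V) (f : V → V) : LTree V where
  supp := u.supp.erase s ∪ v.supp
  root := if u.root = s then v.root else u.root
  parent x :=
    if x ∈ u.supp.erase s then (if u.parent x = s then f x else u.parent x)
    else if x ∈ v.supp then
      (if x = v.root then (if u.parent s = s then v.root else u.parent s) else v.parent x)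
    else x

/-- The Pre-Lie partial composition `u ∘ₛ v := Σ_{f : In(s,u) → Ver(v)} u ∘ₛᶠ v`,
a formal linear combination of rooted trees. -/
noncomputable def plcomp (u : LTree V) (s : V) (v : LTree V) : LTree V →₀ ℚ :=
  ∑ f : {w // w ∈ children u s} → {x // x ∈ v.supp},
    Finsupp.single
      (fcomp u s v (fun w => if h : w ∈ children u s then (f ⟨w, h⟩ : V) else v.root)) 1

/-- Bilinear extension of the Pre-Lie partial composition to formal sums. -/
noncomputable def plext (x : LTree V →₀ ℚ) (s : V) (y : LTree V →₀ ℚ) : LTree V →₀ ℚ :=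
  x.sum fun t a => y.sum fun u b => (a * b) • plcomp t s u

end LTree

/-!
Both composites replace `s` by `y` and `s'` by `z`. An edge of `x` (including the edges
leaving `s` and `s'`, which become the edges leaving `y.root` and `z.root`) is redirected by
`update id s y.root` and by `update id s' z.root`, and these two maps commute because
`s ≠ s'` and the roots of `y`, `z` lie outside `x`. Edges of `y` and `z` are untouched by
the other substitution, since the parent maps of `y` and `z` stay inside their vertex sets,
which are disjoint from `x`.
-/

namespace LTree

variable {V : Type}

theorem ext {t t' : LTree V} (hsupp : t.supp = t'.supp) (hroot : t.root = t'.root)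
    (hparent : t.parent = t'.parent) : t = t' := by
  cases t; cases t'; congr

theorem IsTree.root_mem {t : LTree V} (ht : t.IsTree) : t.root ∈ t.supp := ht.1

theorem IsTree.parent_mem {t : LTree V} (ht : t.IsTree) {w : V} (hw : w ∈ t.supp) :
    t.parent w ∈ t.supp :=
  (ht.2.2.1 w hw).1

variable [DecidableEq V]

open Function

theorem update_id_comm {a b c d : V} (hac : a ≠ c) (hbc : b ≠ c) (hda : d ≠ a) (w : V) :
    update id a b (update id c d w) = update id c d (update id a b w) := by
  simp only [update_apply, id]
  split_ifs <;> simp_all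

theorem mem_ncomp_supp {u v : LTree V} {s w : V} :
    w ∈ (ncomp u s v).supp ↔ (w ≠ s ∧ w ∈ u.supp) ∨ w ∈ v.supp := by
  simp [ncomp]

theorem ncomp_root (u : LTree V) (s : V) (v : LTree V) :
    (ncomp u s v).root = update id s v.root u.root := by
  simp [ncomp, update_apply]

theorem ncomp_parent_of_mem_left {u : LTree V} {s : V} (v : LTree V) {w : V}
    (hw : w ∈ u.supp) (hws : w ≠ s) :
    (ncomp u s v).parent w = update id s v.root (u.parent w) := by
  simp [ncomp, update_apply, hw, hws]

theorem ncomp_parent_root {u v : LTree V} (s : V) (hv : v.root ∈ v.supp)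
    (hu : v.root ∉ u.supp) :
    (ncomp u s v).parent v.root = update id s v.root (u.parent s) := by
  simp [ncomp, update_apply, hv, hu]

theorem ncomp_parent_of_mem_right {u v : LTree V} (s : V) {w : V} (hw : w ∈ v.supp)
    (hu : w ∉ u.supp) (hwr : w ≠ v.root) :
    (ncomp u s v).parent w = v.parent w := by
  simp [ncomp, hw, hu, hwr]

theorem ncomp_parent_of_notMem {u v : LTree V} {s w : V} (hu : w ∈ u.supp → w = s)
    (hv : w ∉ v.supp) :
    (ncomp u s v).parent w = w := by
  have hu' : w ∉ u.supp.erase s := by rw [Finset.mem_erase]; tauto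
  simp only [ncomp, if_neg hu', if_neg hv]

section ParallelComposition

variable {x y z : LTree V} {s s' : V}

theorem ncomp_ncomp_supp_comm (hsz : s ∉ z.supp) (hs'y : s' ∉ y.supp) :
    (ncomp (ncomp x s y) s' z).supp = (ncomp (ncomp x s' z) s y).supp := by
  ext w
  simp only [mem_ncomp_supp]
  grind

theorem ncomp_ncomp_root_comm (hss' : s ≠ s') (hys' : y.root ≠ s') (hzs : z.root ≠ s) :
    (ncomp (ncomp x s y) s' z).root = (ncomp (ncomp x s' z) s y).root := by
  simp only [ncomp_root]
  exact update_id_comm hss'.symm hzs hys' x.root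

/-- The vertices of `z` are handled by applying this lemma with the roles of `(s, y)` and
`(s', z)` exchanged. -/
theorem ncomp_ncomp_parent_comm_of_notMem (hy : y.IsTree) (hz : z.IsTree)
    (hxy : Disjoint x.supp y.supp) (hxz : Disjoint x.supp z.supp)
    (hs : s ∈ x.supp) (hs' : s' ∈ x.supp) (hss' : s ≠ s') {v : V} (hvz : v ∉ z.supp) :
    (ncomp (ncomp x s y) s' z).parent v = (ncomp (ncomp x s' z) s y).parent v := by
  have hs'y : s' ∉ y.supp := Finset.disjoint_left.mp hxy hs'
  have hys' : y.root ≠ s' := fun h => hs'y (h ▸ hy.root_mem)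
  have hzs : z.root ≠ s := fun h => Finset.disjoint_left.mp hxz hs (h ▸ hz.root_mem)
  by_cases hvy : v ∈ y.supp
  · have hvx : v ∉ x.supp := Finset.disjoint_right.mp hxy hvy
    have hvs' : v ≠ s' := fun h => hs'y (h ▸ hvy)
    rw [ncomp_parent_of_mem_left z (mem_ncomp_supp.mpr (.inr hvy)) hvs']
    by_cases hvr : v = y.root
    · subst hvr
      have hnotMem : y.root ∉ (ncomp x s' z).supp := by
        rw [mem_ncomp_supp]; tauto
      rw [ncomp_parent_root s hvy hvx, ncomp_parent_root s hvy hnotMem,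
        ncomp_parent_of_mem_left z hs hss']
      exact update_id_comm hss'.symm hzs hys' _
    · have hpy : y.parent v ≠ s' := fun h => hs'y (h ▸ hy.parent_mem hvy)
      rw [ncomp_parent_of_mem_right s hvy hvx hvr,
        ncomp_parent_of_mem_right s hvy (by rw [mem_ncomp_supp]; tauto) hvr]
      simp [hpy]
  · by_cases hvx : v ∈ x.supp ∧ v ≠ s ∧ v ≠ s'
    · obtain ⟨hvx, hvs, hvs'⟩ := hvx
      rw [ncomp_parent_of_mem_left z (mem_ncomp_supp.mpr (.inl ⟨hvs, hvx⟩)) hvs',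
        ncomp_parent_of_mem_left y hvx hvs, ncomp_parent_of_mem_left y
          (mem_ncomp_supp.mpr (.inl ⟨hvs', hvx⟩)) hvs, ncomp_parent_of_mem_left z hvx hvs']
      exact update_id_comm hss'.symm hzs hys' _
    · rw [ncomp_parent_of_notMem (fun h => by rw [mem_ncomp_supp] at h; tauto) hvz,
        ncomp_parent_of_notMem (fun h => by rw [mem_ncomp_supp] at h; tauto) hvy]

end ParallelComposition

end LTree

open LTree in
theorem nap_parallel_assoc_general {V : Type} [DecidableEq V] (x y z : LTree V)
    (hy : y.IsTree) (hz : z.IsTree)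
    (hxy : Disjoint x.supp y.supp) (hxz : Disjoint x.supp z.supp)
    (hyz : Disjoint y.supp z.supp)
    (s s' : V) (hs : s ∈ x.supp) (hs' : s' ∈ x.supp) (hss' : s ≠ s') :
    ncomp (ncomp x s y) s' z = ncomp (ncomp x s' z) s y := by
  have hsz : s ∉ z.supp := Finset.disjoint_left.mp hxz hs
  have hs'y : s' ∉ y.supp := Finset.disjoint_left.mp hxy hs'
  refine ext (ncomp_ncomp_supp_comm hsz hs'y)
    (ncomp_ncomp_root_comm hss' (fun h => hs'y (h ▸ hy.root_mem))
      (fun h => hsz (h ▸ hz.root_mem))) (funext fun v => ?_)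
  by_cases hvz : v ∈ z.supp
  · have hvy : v ∉ y.supp := Finset.disjoint_right.mp hyz hvz
    exact (ncomp_ncomp_parent_comm_of_notMem hz hy hxz hxy hs' hs hss'.symm hvy).symm
  · exact ncomp_ncomp_parent_comm_of_notMem hy hz hxy hxz hs hs' hss' hvz

open LTree in
/-- NAP parallel associativity: for rooted trees `x`, `y`, `z` with pairwise disjoint
vertex sets and distinct vertices `s`, `s'` of `x`,
`(x ∘ₛ y) ∘ₛ' z = (x ∘ₛ' z) ∘ₛ y`. -/
theorem nap_parallel_assoc {V : Type} [DecidableEq V] (x y z : LTree V)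
    (hx : x.IsTree) (hy : y.IsTree) (hz : z.IsTree)
    (hxy : Disjoint x.supp y.supp) (hxz : Disjoint x.supp z.supp)
    (hyz : Disjoint y.supp z.supp)
    (s s' : V) (hs : s ∈ x.supp) (hs' : s' ∈ x.supp) (hss' : s ≠ s') :
    ncomp (ncomp x s y) s' z = ncomp (ncomp x s' z) s y :=
  nap_parallel_assoc_general x y z hy hz hxy hxz hyz s s' hs hs' hss'
end

section
/- The magmatic partial compositions on labelled planar rooted trees satisfy parallel associativity: (x ∘_s y) ∘_{s'} z = (x ∘_{s'} z) ∘_s y for distinct vertices s, s' of x. -/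
/-- Labelled planar rooted trees over a label type `V`: a labelled root together
with an ordered (left-to-right) list of subtrees. -/
inductive PT (V : Type) : Type
  | node : V → List (PT V) → PT V

namespace PT

variable {V : Type} [DecidableEq V]

/-- The label of the root. -/
def rootLabel : PT V → V
  | .node a _ => a

/-- The subtrees attached to the root, in their left-to-right order. -/
def rootChildren : PT V → List (PT V)
  | .node _ cs => cs

/-- The list of labels (vertices) of a planar rooted tree. -/
def labels : PT V → List V
  | .node a cs => a :: (cs.attach.map fun c => labels c.1).flatten
  decreasing_by all_goals (simp_wf; have := List.sizeOf_lt_of_mem c.2; omega)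

/-- Relabel a planar rooted tree along a map of labels. -/
def mapL (f : V → V) : PT V → PT V
  | .node a cs => .node (f a) (cs.attach.map fun c => mapL f c.1)
  decreasing_by all_goals (simp_wf; have := List.sizeOf_lt_of_mem c.2; omega)

/-- The magmatic partial composition `t ∘ₛ u`: replace the vertex `s` of `t` by the
tree `u`, attaching the branches of `In(s,t)` at the root of `u` to the right of
(i.e. after) the already present branches `In(root u, u)`. -/
def comp : PT V → V → PT V → PT V
  | .node a cs, s, u =>
    if a = s then .node u.rootLabel (u.rootChildren ++ cs)
    else .node a (cs.attach.map fun c => comp c.1 s u)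
  decreasing_by all_goals (simp_wf; have := List.sizeOf_lt_of_mem c.2; omega)

/-- All shuffles (interleavings preserving the order of each argument) of two lists. -/
def shuffles : List α → List α → List (List α)
  | [], ys => [ys]
  | x :: xs, [] => [x :: xs]
  | x :: xs, y :: ys =>
      (shuffles xs (y :: ys)).map (x :: ·) ++ (shuffles (x :: xs) ys).map (y :: ·)
  termination_by xs ys => xs.length + ys.length

/-- All shuffles of three lists. -/
def shuffles3 : List α → List α → List α → List (List α)
  | [], ys, zs => shuffles ys zs
  | x :: xs, [], zs => shuffles (x :: xs) zs
  | x :: xs, y :: ys, [] => shuffles (x :: xs) (y :: ys)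
  | x :: xs, y :: ys, z :: zs =>
      (shuffles3 xs (y :: ys) (z :: zs)).map (x :: ·) ++
        (shuffles3 (x :: xs) ys (z :: zs)).map (y :: ·) ++
          (shuffles3 (x :: xs) (y :: ys) zs).map (z :: ·)
  termination_by xs ys zs => xs.length + ys.length + zs.length

/-- The list of all trees `t ∘ₛᴴ u`, where `H` runs over the shuffles of the ordered
sets `In(root u, u)` and `In(s,t)`: the vertex `s` of `t` is replaced by `u` and the
branches of `In(s,t)` and `In(root u, u)` are attached at the root of `u` in the
left-to-right order prescribed by `H`. -/
def scomp : PT V → V → PT V → List (PT V)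
  | .node a cs, s, u =>
    if a = s then (shuffles u.rootChildren cs).map (fun l => .node u.rootLabel l)
    else (List.sections (cs.attach.map fun c => scomp c.1 s u)).map (fun l => .node a l)
  decreasing_by all_goals (simp_wf; have := List.sizeOf_lt_of_mem c.2; omega)

/-- The shuffle (magmatic) partial composition `t △ₛ u := Σ_H t ∘ₛᴴ u`, a formal
linear combination of planar rooted trees. -/
noncomputable def tri (t : PT V) (s : V) (u : PT V) : PT V →₀ ℚ :=
  ((scomp t s u).map fun r => Finsupp.single r (1 : ℚ)).sum

/-- Bilinear extension of `△ₛ` to formal sums of planar rooted trees. -/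
noncomputable def triext (x : PT V →₀ ℚ) (s : V) (y : PT V →₀ ℚ) : PT V →₀ ℚ :=
  x.sum fun t a => y.sum fun u b => (a * b) • tri t s u

/-- Replace the full subtree at the vertex labelled `s` by the tree `w`. -/
def setAt : PT V → V → PT V → PT V
  | .node a cs, s, w =>
    if a = s then w else .node a (cs.attach.map fun c => setAt c.1 s w)
  decreasing_by all_goals (simp_wf; have := List.sizeOf_lt_of_mem c.2; omega)

/-- The ordered list of branches arriving at the vertex labelled `s`. -/
def childrenAt : PT V → V → List (PT V)
  | .node a cs, s =>
    if a = s then cs else (cs.attach.map fun c => childrenAt c.1 s).flatten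
  decreasing_by all_goals (simp_wf; have := List.sizeOf_lt_of_mem c.2; omega)

theorem ind {P : PT V → Prop} (h : ∀ a cs, (∀ c ∈ cs, P c) → P (.node a cs)) :
    ∀ t, P t
  | .node a cs => h a cs (fun c hc => ind h c)
  decreasing_by all_goals (simp_wf; have := List.sizeOf_lt_of_mem hc; omega)

theorem comp_node (a : V) (cs : List (PT V)) (s : V) (u : PT V) :
    comp (.node a cs) s u =
      if a = s then .node u.rootLabel (u.rootChildren ++ cs)
      else .node a (cs.map (comp · s u)) := by
  rw [comp]
  simp [List.attach_map_val]

theorem labels_node (a : V) (cs : List (PT V)) :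
    labels (.node a cs) = a :: (cs.map labels).flatten := by
  rw [labels]; simp [List.attach_map_val]

theorem rootLabel_mem_labels (t : PT V) : t.rootLabel ∈ t.labels := by
  cases t with
  | node a cs => rw [labels_node]; simp [rootLabel]

theorem mem_labels_of_mem_rootChildren {t c : PT V} (hc : c ∈ t.rootChildren)
    {v : V} (hv : v ∈ c.labels) : v ∈ t.labels := by
  cases t with
  | node a cs =>
    rw [labels_node]
    simp only [rootChildren] at hc
    simp only [List.mem_cons, List.mem_flatten, List.mem_map]
    exact Or.inr ⟨c.labels, ⟨c, hc, rfl⟩, hv⟩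


theorem comp_of_not_mem {s : V} {t : PT V} (h : s ∉ t.labels) (u : PT V) :
    comp t s u = t := by
  induction t using ind with
  | h a cs IH =>
    rw [labels_node] at h
    simp only [List.mem_cons, List.mem_flatten, List.mem_map, not_or] at h
    rw [comp_node, if_neg (fun hh => h.1 hh.symm)]
    congr 1
    rw [List.map_congr_left (fun c hc => IH c hc fun hsc => h.2 ⟨c.labels, ⟨c, hc, rfl⟩, hsc⟩),
      List.map_id']

theorem mag_key {V : Type} [DecidableEq V] (y z : PT V) (s s' : V)
    (hss' : s ≠ s') (hs'y : s' ∉ y.labels) (hsz : s ∉ z.labels) :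
    ∀ x : PT V, comp (comp x s y) s' z = comp (comp x s' z) s y := by
  intro x
  induction x using ind with
  | h a cs IH =>
    rw [comp_node, comp_node]
    by_cases h1 : a = s
    · rw [if_pos h1, if_neg (fun hh => hss' (h1 ▸ hh)), comp_node, comp_node,
        if_neg (fun hh => hs'y (by rw [← hh]; exact rootLabel_mem_labels y)), if_pos h1]
      congr 1
      rw [List.map_append]
      congr 1
      rw [List.map_congr_left
        (fun c hc => comp_of_not_mem (fun hm => hs'y (mem_labels_of_mem_rootChildren hc hm)) z),
        List.map_id']
    · rw [if_neg h1]
      by_cases h2 : a = s'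
      · rw [if_pos h2, comp_node, comp_node, if_pos h2,
          if_neg (fun hh => hsz (by rw [← hh]; exact rootLabel_mem_labels z))]
        congr 1
        rw [List.map_append]
        congr 1
        rw [List.map_congr_left
          (fun c hc => comp_of_not_mem (fun hm => hsz (mem_labels_of_mem_rootChildren hc hm)) y),
          List.map_id']
      · rw [if_neg h2, comp_node, comp_node, if_neg h1, if_neg h2]
        congr 1
        simp only [List.map_map]
        exact List.map_congr_left (fun c hc => IH c hc)

end PT

open PT in
/-- Parallel associativity of the magmatic partial compositions on labelled planar
rooted trees: for distinct vertices `s`, `s'` of `x`,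
`(x ∘ₛ y) ∘ₛ' z = (x ∘ₛ' z) ∘ₛ y`. -/
theorem mag_parallel_assoc {V : Type} [DecidableEq V] (x y z : PT V)
    (hx : x.labels.Nodup) (hy : y.labels.Nodup) (hz : z.labels.Nodup)
    (hxy : ∀ a ∈ x.labels, a ∉ y.labels) (hxz : ∀ a ∈ x.labels, a ∉ z.labels)
    (hyz : ∀ a ∈ y.labels, a ∉ z.labels)
    (s s' : V) (hs : s ∈ x.labels) (hs' : s' ∈ x.labels) (hss' : s ≠ s') :
    comp (comp x s y) s' z = comp (comp x s' z) s y :=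
  mag_key y z s s' hss' (hxy s' hs') (hxz s hs) x
end

section
/- For the diamond compositions on Mag ∘ q, nested associativity holds in the case where t lies in the root block B_r: ((X ◊_s Y) ◊_t Z) = X ◊_s (Y ◊_t Z), using nested associativity of the shuffle-Mag compositions and of q, via the identity (α ∘_s β) ∘_t γ = α ∘_s (β ∘_t γ) when t belongs to the block merged at s. -/
/-- A positive symmetric operad `q`, presented in "supported elements" form over an
ambient label type `V`: a carrier type `Q` of operations, each with a nonempty
finite support (its finite input set) in `V`, together with partial compositions
`∘ₛ`, units, and relabelling along bijections of `V`, satisfying the symmetric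
operad axioms (parallel and nested associativity, naturality, unitality). -/
structure POperad (V : Type) (Q : Type) [DecidableEq V] where
  supp : Q → Finset V
  comp : Q → V → Q → Q
  unit : V → Q
  relabel : (V ≃ V) → Q → Q
  supp_nonempty : ∀ x, (supp x).Nonempty
  supp_comp : ∀ x s y, s ∈ supp x → supp (comp x s y) = (supp x).erase s ∪ supp y
  supp_unit : ∀ a, supp (unit a) = {a}
  supp_relabel : ∀ e x, supp (relabel e x) = (supp x).image e
  parallel : ∀ x y z s s', s ∈ supp x → s' ∈ supp x → s ≠ s' →
    Disjoint (supp x) (supp y) → Disjoint (supp x) (supp z) →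
    Disjoint (supp y) (supp z) →
    comp (comp x s y) s' z = comp (comp x s' z) s y
  nested : ∀ x y z s t, s ∈ supp x → t ∈ supp y →
    Disjoint (supp x) (supp y) → Disjoint (supp x) (supp z) →
    Disjoint (supp y) (supp z) →
    comp (comp x s y) t z = comp x s (comp y t z)
  natural : ∀ e x s y, s ∈ supp x →
    relabel e (comp x s y) = comp (relabel e x) (e s) (relabel e y)
  natural_unit : ∀ e a, relabel e (unit a) = unit (e a)
  unit_left : ∀ a y, comp (unit a) a y = y
  unit_right : ∀ x s, s ∈ supp x → comp x s (unit s) = x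

namespace MagofQ

variable {V Q : Type} [DecidableEq V] [DecidableEq Q]

/-- An element of `Mag ∘ q` is valid when the underlying labelled planar rooted
tree has pairwise distinct vertices (`q`-decorated blocks) whose `q`-supports are
pairwise disjoint (so that they form a partition of the total support). -/
def Valid (q : POperad V Q) (X : PT Q) : Prop :=
  X.labels.Nodup ∧
    ∀ c ∈ X.labels, ∀ c' ∈ X.labels, c ≠ c' → Disjoint (q.supp c) (q.supp c')

/-- The total support (underlying set `I`) of an element of `Mag ∘ q`. -/
def tsupp (q : POperad V Q) (X : PT Q) : Finset V :=
  X.labels.toFinset.biUnion q.supp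

/-- The block `C_s` of `X` containing `s`: the unique vertex of `X` whose
decoration has `s` in its support. -/
noncomputable def blockOf (q : POperad V Q) (X : PT Q) (s : V) : Q :=
  if h : ∃ c, c ∈ X.labels ∧ s ∈ q.supp c then h.choose else X.rootLabel

/-- The list of all trees `(t ∘_{C_s}ᴴ u)` decorated as in the diamond composition:
the vertex `c = C_s` of the first tree is replaced by the second tree, the branches
of `In(C_s,t)` and `In(B_r,u)` are attached at the root of `u` in the left-to-right
order prescribed by the shuffle `H`, and the merged vertex is decorated by
`α_{C_s} ∘ₛ β_{B_r}`. -/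
def qscomp (q : POperad V Q) : PT Q → Q → V → PT Q → List (PT Q)
  | .node a cs, c, s, u =>
    if a = c then
      (PT.shuffles u.rootChildren cs).map
        (fun l => PT.node (q.comp a s u.rootLabel) l)
    else
      (List.sections (cs.attach.map fun d => qscomp q d.1 c s u)).map
        (fun l => PT.node a l)
  decreasing_by all_goals (simp_wf; have := List.sizeOf_lt_of_mem d.2; omega)

/-- The diamond partial composition `◊ₛ` on `Mag ∘ q`:
`(t ⊗ ⊗_C α_C) ◊ₛ (u ⊗ ⊗_B β_B)
  = Σ_{H ∈ sh(In(C_s,t), In(B_r,u))} (t ∘_{C_s}ᴴ u) ⊗ (α_{C_s} ∘ₛ β_{B_r}) ⊗ ⋯`. -/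
noncomputable def dia (q : POperad V Q) (X : PT Q) (s : V) (Y : PT Q) : PT Q →₀ ℚ :=
  ((qscomp q X (blockOf q X s) s Y).map fun r => Finsupp.single r (1 : ℚ)).sum

/-- Bilinear extension of `◊ₛ` to formal sums. -/
noncomputable def diaext (q : POperad V Q) (x : PT Q →₀ ℚ) (s : V) (y : PT Q →₀ ℚ) :
    PT Q →₀ ℚ :=
  x.sum fun t a => y.sum fun u b => (a * b) • dia q t s u

/-- The unit of `Mag ∘ q` on a singleton `{a}`: the one-vertex planar tree
decorated by the unit of `q`. -/
def unitT (q : POperad V Q) (a : V) : PT Q := PT.node (q.unit a) []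

end MagofQ

section Aux

namespace PT
variable {α : Type*}

theorem shuffles_nil_right : ∀ (l : List α), shuffles l [] = [l]
  | [] => by rw [shuffles]
  | x :: xs => by rw [shuffles]

theorem mem_shuffles_perm : ∀ (xs ys H : List α), H ∈ shuffles xs ys → H.Perm (xs ++ ys)
  | [], ys, H, h => by rw [shuffles] at h; simp_all
  | x :: xs, [], H, h => by rw [shuffles] at h; simp_all
  | x :: xs, y :: ys, H, h => by
      rw [shuffles] at h
      rcases List.mem_append.mp h with h | h
      · obtain ⟨l, hl, rfl⟩ := List.mem_map.mp h
        exact (mem_shuffles_perm _ _ _ hl).cons x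
      · obtain ⟨l, hl, rfl⟩ := List.mem_map.mp h
        exact ((mem_shuffles_perm _ _ _ hl).cons y).trans List.perm_middle.symm
  termination_by xs ys => xs.length + ys.length

theorem shuffles_bind_left : ∀ (xs ys zs : List α),
    ((↑(shuffles ys zs) : Multiset (List α)).bind fun l => ↑(shuffles xs l)) =
      (↑(shuffles3 xs ys zs) : Multiset (List α))
  | [], ys, zs => by
      rw [shuffles3]
      simp only [shuffles]
      simpa using Multiset.bind_singleton (↑(shuffles ys zs) : Multiset (List α)) id
  | x :: xs, [], zs => by
      rw [shuffles3, shuffles]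
      simp [Multiset.singleton_bind]
  | x :: xs, y :: ys, [] => by
      rw [shuffles3, shuffles_nil_right]
      simp [Multiset.singleton_bind]
  | x :: xs, y :: ys, z :: zs => by
      have IH1 := shuffles_bind_left xs (y :: ys) (z :: zs)
      have IH2 := shuffles_bind_left (x :: xs) ys (z :: zs)
      have IH3 := shuffles_bind_left (x :: xs) (y :: ys) zs
      rw [shuffles3, show shuffles (y :: ys) (z :: zs) =
        (shuffles ys (z :: zs)).map (y :: ·) ++ (shuffles (y :: ys) zs).map (z :: ·) from by rw [shuffles]]
      rw [shuffles] at IH1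
      simp only [← Multiset.coe_add, ← Multiset.map_coe] at *
      rw [Multiset.add_bind, Multiset.bind_map, Multiset.bind_map]
      have e1 : ∀ l : List α, (↑(shuffles (x :: xs) (y :: l)) : Multiset (List α)) =
          (↑(shuffles xs (y :: l)) : Multiset (List α)).map (x :: ·) +
            (↑(shuffles (x :: xs) l) : Multiset (List α)).map (y :: ·) := fun l => by
        rw [shuffles]; simp only [← Multiset.coe_add, ← Multiset.map_coe]
      have e2 : ∀ l : List α, (↑(shuffles (x :: xs) (z :: l)) : Multiset (List α)) =
          (↑(shuffles xs (z :: l)) : Multiset (List α)).map (x :: ·) +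
            (↑(shuffles (x :: xs) l) : Multiset (List α)).map (z :: ·) := fun l => by
        rw [shuffles]; simp only [← Multiset.coe_add, ← Multiset.map_coe]
      simp only [e1, e2, Multiset.bind_add, ← Multiset.map_bind]
      rw [← IH2, ← IH3, ← IH1]
      rw [Multiset.add_bind, Multiset.bind_map, Multiset.bind_map]
      rw [Multiset.map_add]
      abel
  termination_by xs ys zs => xs.length + ys.length + zs.length

theorem shuffles_bind_right : ∀ (xs ys zs : List α),
    ((↑(shuffles xs ys) : Multiset (List α)).bind fun l => ↑(shuffles l zs)) =
      (↑(shuffles3 xs ys zs) : Multiset (List α))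
  | [], ys, zs => by
      rw [shuffles3]
      simp only [shuffles, Multiset.coe_singleton, Multiset.singleton_bind]
  | x :: xs, [], zs => by
      rw [shuffles3]
      simp only [shuffles, Multiset.coe_singleton, Multiset.singleton_bind]
  | x :: xs, y :: ys, [] => by
      rw [shuffles3]
      simp only [shuffles_nil_right]
      simpa using Multiset.bind_singleton (↑(shuffles (x :: xs) (y :: ys)) : Multiset (List α)) id
  | x :: xs, y :: ys, z :: zs => by
      have IH1 := shuffles_bind_right xs (y :: ys) (z :: zs)
      have IH2 := shuffles_bind_right (x :: xs) ys (z :: zs)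
      have IH3 := shuffles_bind_right (x :: xs) (y :: ys) zs
      rw [shuffles3]
      simp only [← Multiset.coe_add, ← Multiset.map_coe] at *
      have hx : (↑(shuffles (x :: xs) (y :: ys)) : Multiset (List α)) =
          (↑(shuffles xs (y :: ys)) : Multiset (List α)).map (x :: ·) +
            (↑(shuffles (x :: xs) ys) : Multiset (List α)).map (y :: ·) := by
        rw [shuffles]; simp only [← Multiset.coe_add, ← Multiset.map_coe]
      rw [hx, Multiset.add_bind, Multiset.bind_map, Multiset.bind_map]
      have e1 : ∀ l : List α, (↑(shuffles (x :: l) (z :: zs)) : Multiset (List α)) =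
          (↑(shuffles l (z :: zs)) : Multiset (List α)).map (x :: ·) +
            (↑(shuffles (x :: l) zs) : Multiset (List α)).map (z :: ·) := fun l => by
        rw [shuffles]; simp only [← Multiset.coe_add, ← Multiset.map_coe]
      have e2 : ∀ l : List α, (↑(shuffles (y :: l) (z :: zs)) : Multiset (List α)) =
          (↑(shuffles l (z :: zs)) : Multiset (List α)).map (y :: ·) +
            (↑(shuffles (y :: l) zs) : Multiset (List α)).map (z :: ·) := fun l => by
        rw [shuffles]; simp only [← Multiset.coe_add, ← Multiset.map_coe]
      simp only [e1, e2, Multiset.bind_add, ← Multiset.map_bind]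
      rw [← IH1, ← IH2, ← IH3]
      have h3a : ((↑(shuffles xs (y :: ys)) : Multiset (List α)).bind
          fun l => ↑(shuffles (x :: l) zs)) =
          ((↑(shuffles xs (y :: ys)) : Multiset (List α)).map (x :: ·)).bind
            fun m => (↑(shuffles m zs) : Multiset (List α)) := by
        rw [Multiset.bind_map]
      have h3b : ((↑(shuffles (x :: xs) ys) : Multiset (List α)).bind
          fun l => ↑(shuffles (y :: l) zs)) =
          ((↑(shuffles (x :: xs) ys) : Multiset (List α)).map (y :: ·)).bind
            fun m => (↑(shuffles m zs) : Multiset (List α)) := by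
        rw [Multiset.bind_map]
      rw [h3a, h3b, hx, Multiset.add_bind, Multiset.map_add]
      abel
  termination_by xs ys zs => xs.length + ys.length + zs.length

theorem shuffles_assoc (xs ys zs : List α) :
    ((↑(shuffles ys zs) : Multiset (List α)).bind fun l => ↑(shuffles xs l)) =
      ((↑(shuffles xs ys) : Multiset (List α)).bind
        fun l => (↑(shuffles l zs) : Multiset (List α))) := by
  rw [shuffles_bind_left, shuffles_bind_right]

variable {W : Type} [DecidableEq W]

theorem labels_node_s18 (a : W) (cs : List (PT W)) :
    (PT.node a cs).labels = a :: cs.flatMap PT.labels := by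
  rw [labels]
  simp [List.flatMap_def]

theorem rootLabel_mem : ∀ (X : PT W), X.rootLabel ∈ X.labels
  | .node a cs => by rw [labels_node_s18]; simp [rootLabel]

theorem mem_labels_of_child {d : PT W} {cs : List (PT W)} (a : W) (hd : d ∈ cs)
    {b : W} (hb : b ∈ d.labels) : b ∈ (PT.node a cs).labels := by
  rw [labels_node_s18]
  exact List.mem_cons_of_mem _ (List.mem_flatMap.mpr ⟨d, hd, hb⟩)

end PT

theorem List.flatMap_single {α β : Type*} (L : List α) (f : α → β) :
    L.flatMap (fun s => [f s]) = L.map f := by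
  induction L <;> simp_all

theorem List.sections_of_singletons {α : Type*} (bs : List α) (g : α → List α)
    (h : ∀ d ∈ bs, g d = [d]) : (bs.map g).sections = [bs] := by
  induction bs with
  | nil => simp [List.sections]
  | cons b bs ih =>
      simp only [List.map_cons, List.sections, h b (by simp),
        ih (fun d hd => h d (by simp [hd]))]
      simp

theorem List.sections_decomp {α : Type*} (g : α → List α) (as bs : List α) (d0 : α)
    (ha : ∀ d ∈ as, g d = [d]) (hb : ∀ d ∈ bs, g d = [d]) :
    ((as ++ d0 :: bs).map g).sections = (g d0).map fun x => as ++ x :: bs := by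
  induction as with
  | nil =>
      simp only [List.nil_append, List.map_cons, List.sections,
        List.sections_of_singletons bs g hb]
      simp
  | cons a as ih =>
      have ih' := ih (fun d hd => ha d (by simp [hd]))
      rw [List.cons_append, List.map_cons, List.sections, ih', ha a (by simp),
        List.flatMap_map]
      simp only [List.map_cons, List.map_nil, List.flatMap_single]
      simp

theorem PT.decomp {W : Type} [DecidableEq W] {a c : W} {cs : List (PT W)} (hac : a ≠ c)
    (hmem : c ∈ (PT.node a cs).labels) (hcnt : ((PT.node a cs).labels).count c ≤ 1) :
    ∃ as d0 bs, cs = as ++ d0 :: bs ∧ c ∈ d0.labels ∧ d0.labels.count c ≤ 1 ∧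
      (∀ d ∈ as, c ∉ d.labels) ∧ (∀ d ∈ bs, c ∉ d.labels) := by
  rw [PT.labels_node_s18] at hmem hcnt
  have hc2 : c ∈ cs.flatMap PT.labels := by
    rcases List.mem_cons.mp hmem with h | h
    · exact absurd h.symm hac
    · exact h
  obtain ⟨d0, hd0, hcd0⟩ := List.mem_flatMap.mp hc2
  obtain ⟨as, bs, rfl⟩ := List.append_of_mem hd0
  have hcnt' : ((as ++ d0 :: bs).flatMap PT.labels).count c ≤ 1 := by
    rw [List.count_cons] at hcnt
    omega
  rw [List.flatMap_append, List.flatMap_cons, List.count_append, List.count_append] at hcnt'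
  have hd0pos : 0 < d0.labels.count c := List.count_pos_iff.mpr hcd0
  refine ⟨as, d0, bs, rfl, hcd0, by omega, ?_, ?_⟩
  · intro d hd hcd
    have : 0 < (as.flatMap PT.labels).count c :=
      List.count_pos_iff.mpr (List.mem_flatMap.mpr ⟨d, hd, hcd⟩)
    omega
  · intro d hd hcd
    have : 0 < (bs.flatMap PT.labels).count c :=
      List.count_pos_iff.mpr (List.mem_flatMap.mpr ⟨d, hd, hcd⟩)
    omega

namespace MagofQ
variable {V Q : Type} [DecidableEq V] [DecidableEq Q]

theorem qscomp_node (q : POperad V Q) (a : Q) (cs : List (PT Q)) (c : Q) (s : V) (u : PT Q) :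
    qscomp q (PT.node a cs) c s u =
      if a = c then
        (PT.shuffles u.rootChildren cs).map (fun l => PT.node (q.comp a s u.rootLabel) l)
      else
        (List.sections (cs.map fun d => qscomp q d c s u)).map (fun l => PT.node a l) := by
  rw [qscomp]
  simp

theorem qscomp_not_mem (q : POperad V Q) :
    ∀ (X : PT Q) (c : Q) (s : V) (u : PT Q), c ∉ X.labels → qscomp q X c s u = [X]
  | .node a cs, c, s, u, h => by
      rw [PT.labels_node_s18] at h
      simp only [List.mem_cons, not_or] at h
      obtain ⟨h1, h2⟩ := h
      rw [qscomp_node, if_neg (fun e => h1 e.symm)]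
      rw [List.sections_of_singletons _ _ (fun d hd => qscomp_not_mem q d c s u
        (fun hc => h2 (List.mem_flatMap.mpr ⟨d, hd, hc⟩)))]
      simp
  termination_by X => sizeOf X
  decreasing_by simp_wf; have := List.sizeOf_lt_of_mem hd; omega

theorem labels_qscomp (q : POperad V Q) (u : PT Q) (c : Q) (s : V) :
    ∀ (X : PT Q), c ∈ X.labels → X.labels.count c ≤ 1 →
      ∀ W ∈ qscomp q X c s u,
        q.comp c s u.rootLabel ∈ W.labels ∧
        ∀ b ∈ W.labels, b = q.comp c s u.rootLabel ∨ b ∈ X.labels ∨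
          b ∈ u.rootChildren.flatMap PT.labels
  | .node a cs, hmem, hcnt, W, hW => by
      by_cases hac : a = c
      · subst hac
        rw [qscomp_node, if_pos rfl] at hW
        obtain ⟨H, hH, rfl⟩ := List.mem_map.mp hW
        rw [PT.labels_node_s18]
        constructor
        · exact List.mem_cons_self
        · intro b hb
          rcases List.mem_cons.mp hb with rfl | hb
          · exact Or.inl rfl
          · obtain ⟨d, hd, hbd⟩ := List.mem_flatMap.mp hb
            have hd' := (PT.mem_shuffles_perm _ _ _ hH).mem_iff.mp hd
            rcases List.mem_append.mp hd' with hd' | hd'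
            · exact Or.inr (Or.inr (List.mem_flatMap.mpr ⟨d, hd', hbd⟩))
            · exact Or.inr (Or.inl (PT.mem_labels_of_child a hd' hbd))
      · obtain ⟨as, d0, bs, rfl, hcd0, hcnt0, hasn, hbsn⟩ := PT.decomp (fun e => hac e) hmem hcnt
        rw [qscomp_node, if_neg hac,
          List.sections_decomp _ as bs d0
            (fun d hd => qscomp_not_mem q d c s u (hasn d hd))
            (fun d hd => qscomp_not_mem q d c s u (hbsn d hd)),
          List.map_map] at hW
        simp only [Function.comp_def] at hW
        obtain ⟨x, hx, rfl⟩ := List.mem_map.mp hW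
        have IH := labels_qscomp q u c s d0 hcd0 hcnt0 x hx
        constructor
        · exact PT.mem_labels_of_child a (by simp) IH.1
        · intro b hb
          rw [PT.labels_node_s18] at hb
          rcases List.mem_cons.mp hb with rfl | hb
          · exact Or.inr (Or.inl (PT.rootLabel_mem (PT.node b (as ++ d0 :: bs))))
          · obtain ⟨d, hd, hbd⟩ := List.mem_flatMap.mp hb
            rcases List.mem_append.mp hd with hd | hd
            · exact Or.inr (Or.inl (PT.mem_labels_of_child a (by simp [hd]) hbd))
            · rcases List.mem_cons.mp hd with rfl | hd
              · rcases IH.2 b hbd with h | h | h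
                · exact Or.inl h
                · exact Or.inr (Or.inl (PT.mem_labels_of_child a (by simp) h))
                · exact Or.inr (Or.inr h)
              · exact Or.inr (Or.inl (PT.mem_labels_of_child a (by simp [hd]) hbd))
  termination_by X => sizeOf X
  decreasing_by
    simp_wf; subst_vars
    have : sizeOf d0 < sizeOf (as ++ d0 :: bs) := List.sizeOf_lt_of_mem (by simp)
    omega


theorem qscomp_nested_aux (q : POperad V Q) (Y Z : PT Q) (s t : V) (c m1 m2 : Q)
    (hm1 : q.comp c s Y.rootLabel = m1)
    (hm2 : q.comp m1 t Z.rootLabel = m2)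
    (hm2' : q.comp c s (q.comp Y.rootLabel t Z.rootLabel) = m2) :
    ∀ (X : PT Q), c ∈ X.labels → X.labels.count c ≤ 1 →
      (∀ b ∈ X.labels, b ≠ m1) →
      (↑((qscomp q X c s Y).flatMap fun W => qscomp q W m1 t Z) : Multiset (PT Q)) =
        ↑((qscomp q Y Y.rootLabel t Z).flatMap fun Y' => qscomp q X c s Y')
  | .node a cs, hmem, hcnt, hne => by
      by_cases hac : a = c
      · subst hac
        rw [qscomp_node, if_pos rfl, hm1, List.flatMap_map]
        have e : ∀ l : List (PT Q), qscomp q (PT.node m1 l) m1 t Z =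
            (PT.shuffles Z.rootChildren l).map (fun r => PT.node m2 r) := fun l => by
          rw [qscomp_node, if_pos rfl, hm2]
        simp only [e]
        have eY : qscomp q Y Y.rootLabel t Z =
            (PT.shuffles Z.rootChildren Y.rootChildren).map
              (fun l => PT.node (q.comp Y.rootLabel t Z.rootLabel) l) := by
          cases Y with
          | node yβ ycs => rw [qscomp_node]; simp [PT.rootLabel, PT.rootChildren]
        rw [eY, List.flatMap_map]
        have e' : ∀ l : List (PT Q),
            qscomp q (PT.node a cs) a s (PT.node (q.comp Y.rootLabel t Z.rootLabel) l) =
              (PT.shuffles l cs).map (fun r => PT.node m2 r) := fun l => by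
          rw [qscomp_node, if_pos rfl,
            show (PT.node (q.comp Y.rootLabel t Z.rootLabel) l).rootLabel =
              q.comp Y.rootLabel t Z.rootLabel from rfl,
            show (PT.node (q.comp Y.rootLabel t Z.rootLabel) l).rootChildren = l from rfl,
            hm2']
        simp only [e']
        rw [← List.map_flatMap, ← List.map_flatMap]
        simp only [← Multiset.map_coe]
        refine congrArg _ ?_
        rw [← Multiset.coe_bind, ← Multiset.coe_bind]
        exact PT.shuffles_assoc Z.rootChildren Y.rootChildren cs
      · obtain ⟨as, d0, bs, hcs, hcd0, hcnt0, hasn, hbsn⟩ :=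
          PT.decomp (fun e => hac e) hmem hcnt
        subst hcs
        have hneX : ∀ (d : PT Q), d ∈ as ∨ d ∈ bs → ∀ b ∈ d.labels, b ≠ m1 := by
          intro d hd b hb
          refine hne b (PT.mem_labels_of_child a ?_ hb)
          rcases hd with hd | hd
          · exact List.mem_append_left _ hd
          · exact List.mem_append_right _ (List.mem_cons_of_mem _ hd)
        have efirst : ∀ (u : PT Q), qscomp q (PT.node a (as ++ d0 :: bs)) c s u =
            (qscomp q d0 c s u).map (fun x => PT.node a (as ++ x :: bs)) := fun u => by
          rw [qscomp_node, if_neg hac,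
            List.sections_decomp _ as bs d0
              (fun d hd => qscomp_not_mem q d c s u (hasn d hd))
              (fun d hd => qscomp_not_mem q d c s u (hbsn d hd)),
            List.map_map]
          simp only [Function.comp_def]
        have ham1 : a ≠ m1 := hne a (by rw [PT.labels_node_s18]; exact List.mem_cons_self)
        have esecond : ∀ (x : PT Q), qscomp q (PT.node a (as ++ x :: bs)) m1 t Z =
            (qscomp q x m1 t Z).map (fun r => PT.node a (as ++ r :: bs)) := fun x => by
          rw [qscomp_node, if_neg ham1,
            List.sections_decomp _ as bs x
              (fun d hd => qscomp_not_mem q d m1 t Z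
                (fun hm => hneX d (Or.inl hd) m1 hm rfl))
              (fun d hd => qscomp_not_mem q d m1 t Z
                (fun hm => hneX d (Or.inr hd) m1 hm rfl)),
            List.map_map]
          simp only [Function.comp_def]
        rw [efirst Y, List.flatMap_map]
        simp only [esecond, efirst]
        rw [← List.map_flatMap, ← List.map_flatMap]
        simp only [← Multiset.map_coe]
        refine congrArg _ ?_
        exact qscomp_nested_aux q Y Z s t c m1 m2 hm1 hm2 hm2' d0 hcd0 hcnt0
          (fun b hb => hne b (PT.mem_labels_of_child a (by simp) hb))
  termination_by X => sizeOf X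
  decreasing_by
    simp_wf; subst_vars
    have : sizeOf d0 < sizeOf (as ++ d0 :: bs) := List.sizeOf_lt_of_mem (by simp)
    omega

theorem blockOf_spec (q : POperad V Q) (X : PT Q) (v : V)
    (h : ∃ b, b ∈ X.labels ∧ v ∈ q.supp b) :
    blockOf q X v ∈ X.labels ∧ v ∈ q.supp (blockOf q X v) := by
  unfold blockOf
  rw [dif_pos h]
  exact h.choose_spec

theorem blockOf_eq (q : POperad V Q) (X : PT Q) (v : V) (b : Q) (hb : b ∈ X.labels)
    (hv : v ∈ q.supp b) (huniq : ∀ a ∈ X.labels, v ∈ q.supp a → a = b) :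
    blockOf q X v = b := by
  obtain ⟨h1, h2⟩ := blockOf_spec q X v ⟨b, hb, hv⟩
  exact huniq _ h1 h2

theorem supp_subset_tsupp (q : POperad V Q) {X : PT Q} {b : Q} (hb : b ∈ X.labels) :
    q.supp b ⊆ tsupp q X :=
  Finset.subset_biUnion_of_mem q.supp (List.mem_toFinset.mpr hb)

theorem diaext_single_left (q : POperad V Q) (X : PT Q) (s : V) (y : PT Q →₀ ℚ) :
    diaext q (Finsupp.single X 1) s y = y.sum fun u b => b • dia q X s u := by
  rw [diaext, Finsupp.sum_single_index]
  · simp only [one_mul]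
  · simp

theorem diaext_zero_left (q : POperad V Q) (s : V) (y : PT Q →₀ ℚ) :
    diaext q 0 s y = 0 := by
  rw [diaext]; exact Finsupp.sum_zero_index

theorem diaext_add_left (q : POperad V Q) (x1 x2 : PT Q →₀ ℚ) (s : V) (y : PT Q →₀ ℚ) :
    diaext q (x1 + x2) s y = diaext q x1 s y + diaext q x2 s y := by
  rw [diaext, diaext, diaext]
  apply Finsupp.sum_add_index'
  · intro a; simp
  · intro a b1 b2
    rw [← Finsupp.sum_add]
    congr 1
    ext u b
    rw [add_mul, add_smul]

theorem dia_list_left (q : POperad V Q) (L : List (PT Q)) (t : V) (y : PT Q →₀ ℚ) :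
    diaext q ((L.map fun r => Finsupp.single r (1 : ℚ)).sum) t y =
      (L.map fun r => diaext q (Finsupp.single r (1 : ℚ)) t y).sum := by
  induction L with
  | nil => simp [diaext_zero_left]
  | cons r L ih => simp only [List.map_cons, List.sum_cons, diaext_add_left, ih]

theorem diaext_single_single (q : POperad V Q) (X Z : PT Q) (t : V) :
    diaext q (Finsupp.single X (1 : ℚ)) t (Finsupp.single Z (1 : ℚ)) = dia q X t Z := by
  rw [diaext_single_left, Finsupp.sum_single_index (by simp), one_smul]

theorem sum_single_sum (q : POperad V Q) (X : PT Q) (s : V) :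
    ∀ L : List (PT Q),
      (((L.map fun r => Finsupp.single r (1 : ℚ)).sum).sum fun u b => b • dia q X s u) =
        (L.map fun u => dia q X s u).sum
  | [] => by simp
  | r :: L => by
      simp only [List.map_cons, List.sum_cons]
      rw [Finsupp.sum_add_index' (fun u => zero_smul ℚ (dia q X s u))
          (fun u b1 b2 => add_smul b1 b2 (dia q X s u)),
        Finsupp.sum_single_index (zero_smul ℚ (dia q X s r)), one_smul,
        sum_single_sum q X s L]

theorem sum_map_flatMap {γ δ M : Type*} [AddCommMonoid M] (L : List γ) (g : γ → List δ)
    (f : δ → M) :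
    ((L.flatMap g).map f).sum = (L.map fun a => ((g a).map f).sum).sum := by
  induction L with
  | nil => simp
  | cons a L ih => simp [ih]

end MagofQ

end Aux

open MagofQ in
/-- For the diamond compositions on `Mag ∘ q`, nested associativity holds in the
case where the element `t` lies in the root block `B_r` of `Y`:
`(X ◊ₛ Y) ◊ₜ Z = X ◊ₛ (Y ◊ₜ Z)`. -/
theorem MagofQ_nested_root_block {V Q : Type} [DecidableEq V] [DecidableEq Q]
    (q : POperad V Q) (X Y Z : PT Q)
    (hX : Valid q X) (hY : Valid q Y) (hZ : Valid q Z)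
    (hXY : Disjoint (tsupp q X) (tsupp q Y))
    (hXZ : Disjoint (tsupp q X) (tsupp q Z))
    (hYZ : Disjoint (tsupp q Y) (tsupp q Z))
    (s : V) (hs : s ∈ tsupp q X)
    (t : V) (ht : t ∈ q.supp Y.rootLabel) :
    diaext q (dia q X s Y) t (Finsupp.single Z 1) =
      diaext q (Finsupp.single X 1) s (dia q Y t Z) := by
  classical
  have hex : ∃ b, b ∈ X.labels ∧ s ∈ q.supp b := by
    simp only [tsupp, Finset.mem_biUnion, List.mem_toFinset] at hs
    exact hs
  set c := blockOf q X s with hc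
  obtain ⟨hcX, hsc⟩ := blockOf_spec q X s hex
  rw [← hc] at hcX hsc
  have hβY : Y.rootLabel ∈ Y.labels := PT.rootLabel_mem Y
  have dcβ : Disjoint (q.supp c) (q.supp Y.rootLabel) :=
    Finset.disjoint_of_subset_left (supp_subset_tsupp q hcX)
      (Finset.disjoint_of_subset_right (supp_subset_tsupp q hβY) hXY)
  have dcγ : Disjoint (q.supp c) (q.supp Z.rootLabel) :=
    Finset.disjoint_of_subset_left (supp_subset_tsupp q hcX)
      (Finset.disjoint_of_subset_right (supp_subset_tsupp q (PT.rootLabel_mem Z)) hXZ)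
  have dβγ : Disjoint (q.supp Y.rootLabel) (q.supp Z.rootLabel) :=
    Finset.disjoint_of_subset_left (supp_subset_tsupp q hβY)
      (Finset.disjoint_of_subset_right (supp_subset_tsupp q (PT.rootLabel_mem Z)) hYZ)
  set m1 := q.comp c s Y.rootLabel with hm1
  set m2 := q.comp m1 t Z.rootLabel with hm2
  have hm2' : q.comp c s (q.comp Y.rootLabel t Z.rootLabel) = m2 := by
    rw [hm2, hm1]
    exact (q.nested c Y.rootLabel Z.rootLabel s t hsc ht dcβ dcγ dβγ).symm
  have hcnt : X.labels.count c ≤ 1 := List.nodup_iff_count_le_one.mp hX.1 c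
  have hne : ∀ b ∈ X.labels, b ≠ m1 := by
    intro b hb heq
    obtain ⟨v, hv⟩ := q.supp_nonempty Y.rootLabel
    have hvm1 : v ∈ q.supp m1 := by
      rw [hm1, q.supp_comp c s _ hsc]
      exact Finset.mem_union_right _ hv
    have hvX : v ∈ tsupp q X := supp_subset_tsupp q hb (by rw [heq]; exact hvm1)
    exact (Finset.disjoint_left.mp hXY hvX) (supp_subset_tsupp q hβY hv)
  have hbY : blockOf q Y t = Y.rootLabel := by
    refine blockOf_eq q Y t _ hβY ht ?_
    intro b hb htb
    by_contra hne'
    exact (Finset.disjoint_left.mp (hY.2 b hb _ hβY hne') htb) ht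
  have htX : ∀ b ∈ X.labels, t ∉ q.supp b := by
    intro b hb htb
    exact (Finset.disjoint_left.mp hXY (supp_subset_tsupp q hb htb))
      (supp_subset_tsupp q hβY ht)
  have hbW : ∀ W ∈ qscomp q X c s Y, blockOf q W t = m1 := by
    intro W hW
    obtain ⟨hm1W, hcls⟩ := labels_qscomp q Y c s X hcX hcnt W hW
    refine blockOf_eq q W t m1 (by rw [hm1]; exact hm1W)
      (by rw [hm1, q.supp_comp c s _ hsc]; exact Finset.mem_union_right _ ht) ?_
    intro b hb htb
    rcases hcls b hb with h | h | h
    · rw [h, ← hm1]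
    · exact absurd htb (htX b h)
    · obtain ⟨d, hd, hbd⟩ := List.mem_flatMap.mp h
      have hbY' : b ∈ Y.labels := by
        cases Y with
        | node yβ ycs =>
            exact PT.mem_labels_of_child _ (by simpa [PT.rootChildren] using hd) hbd
      have hbneβ : b ≠ Y.rootLabel := by
        cases Y with
        | node yβ ycs =>
            intro heq
            rw [show (PT.node yβ ycs).rootLabel = yβ from rfl] at heq
            subst heq
            have hnd := hY.1
            rw [PT.labels_node_s18] at hnd
            exact (List.nodup_cons.mp hnd).1
              (List.mem_flatMap.mpr ⟨d, by simpa [PT.rootChildren] using hd, hbd⟩)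
      exact absurd ht (Finset.disjoint_left.mp (hY.2 b hbY' _ hβY hbneβ) htb)
  rw [show dia q X s Y =
      ((qscomp q X c s Y).map fun r => Finsupp.single r (1 : ℚ)).sum from by rw [hc]; rfl]
  rw [dia_list_left]
  simp only [diaext_single_single]
  have hL : (qscomp q X c s Y).map (fun W => dia q W t Z) =
      (qscomp q X c s Y).map
        (fun W => ((qscomp q W m1 t Z).map fun r => Finsupp.single r (1 : ℚ)).sum) :=
    List.map_congr_left (fun W hW => by rw [dia, hbW W hW])
  rw [hL, ← sum_map_flatMap]
  rw [show dia q Y t Z =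
      ((qscomp q Y Y.rootLabel t Z).map fun r => Finsupp.single r (1 : ℚ)).sum from by
        rw [← hbY]; rfl]
  rw [diaext_single_left, sum_single_sum]
  have hR : (qscomp q Y Y.rootLabel t Z).map (fun u => dia q X s u) =
      (qscomp q Y Y.rootLabel t Z).map
        (fun Y' => ((qscomp q X c s Y').map fun r => Finsupp.single r (1 : ℚ)).sum) :=
    List.map_congr_left (fun u _ => by rw [dia, ← hc])
  rw [hR, ← sum_map_flatMap]
  have hperm := Multiset.coe_eq_coe.mp
    (qscomp_nested_aux q Y Z s t c m1 m2 hm1.symm hm2.symm hm2' X hcX hcnt hne)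
  exact (hperm.map fun r => Finsupp.single r (1 : ℚ)).sum_eq
end
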